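/- Let v ∈ O₃⁺ with dim_ℚ(v₁,v₂,v₃) = 2 and v₁ + v₂ ≤ v₃, and suppose there exists n₀ ∈ ℕ with v₁⁽ⁿ⁰⁾ = 0. Then the arithmetical discrete plane P(v, Ω(v)) is 2-connected and Ω(v) = v₃ + gcd(v₁, v₂). -/

import Mathlib

open Matrix
open scoped Classical

noncomputable section

abbrev Z3 := Fin 3 → ℤ
abbrev R3 := Fin 3 → ℝ

/-- The inner product `⟨x, v⟩` of an integer vector with a real vector. -/
def dot3 (x : Z3) (v : R3) : ℝ := ∑ i, (x i : ℝ) * v i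

/-- Two points of `ℤ³` are 2-adjacent if `‖x − y‖₁ = 1`. -/
def adj3 (x y : Z3) : Prop := (∑ i, |x i - y i|) = 1

/-- A subset of `ℤ³` is 2-connected if it is nonempty and any two of its points are
joined by a finite chain of points of the set with consecutive points 2-adjacent. -/
def Connected3 (A : Set Z3) : Prop :=
  A.Nonempty ∧ ∀ x ∈ A, ∀ y ∈ A,
    Relation.ReflTransGen (fun a b => b ∈ A ∧ adj3 a b) x y

/-- The arithmetical discrete plane `P(v, ω)`. -/
def Plane (v : R3) (ω : ℝ) : Set Z3 := {x | 0 ≤ dot3 x v ∧ dot3 x v < ω}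

/-- The connecting thickness `Ω(v)`. -/
def omegaConn (v : R3) : ℝ := sInf {ω : ℝ | 0 ≤ ω ∧ Connected3 (Plane v ω)}

/-- `O₃⁺ = {v : 0 ≤ v₁ ≤ v₂ ≤ v₃}`. -/
def O3 : Set R3 := {v | 0 ≤ v 0 ∧ v 0 ≤ v 1 ∧ v 1 ≤ v 2}

/-- The ordered fully subtractive map. -/
def FS (v : R3) : R3 :=
  if v 0 ≤ v 1 - v 0 ∧ v 1 - v 0 ≤ v 2 - v 0 then ![v 0, v 1 - v 0, v 2 - v 0]
  else if v 1 - v 0 < v 0 ∧ v 0 ≤ v 2 - v 0 then ![v 1 - v 0, v 0, v 2 - v 0]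
  else ![v 1 - v 0, v 2 - v 0, v 0]

/-- `F₃ = {v ∈ O₃⁺ : v₁⁽ⁿ⁾ + v₂⁽ⁿ⁾ > v₃⁽ⁿ⁾ for all n}`. -/
def F3set : Set R3 :=
  {v | v ∈ O3 ∧ ∀ n : ℕ, (FS^[n] v) 2 < (FS^[n] v) 0 + (FS^[n] v) 1}

/-- Branch index of `F` at `v`: values `0, 1, 2` encode the branches labelled `1, 2, 3`. -/
def FSidx (v : R3) : Fin 3 :=
  if v 0 ≤ v 1 - v 0 ∧ v 1 - v 0 ≤ v 2 - v 0 then 0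
  else if v 1 - v 0 < v 0 ∧ v 0 ≤ v 2 - v 0 then 1
  else 2

/-- The matrices `M₁, M₂, M₃` of the fully subtractive algorithm. -/
def Mmat : Fin 3 → Matrix (Fin 3) (Fin 3) ℤ :=
  ![!![1,0,0; 1,1,0; 1,0,1], !![0,1,0; 1,1,0; 0,1,1], !![0,0,1; 1,0,1; 0,1,1]]

def e1 : Z3 := ![1,0,0]

/-- The product `M₁ ⋯ Mₙ` of the matrices associated with the F-expansion of `v`. -/
def prodM (v : R3) (n : ℕ) : Matrix (Fin 3) (Fin 3) ℤ :=
  ((List.range n).map (fun j => Mmat (FSidx (FS^[j] v)))).prod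

/-- The translation vector `((M₁⋯Mₙ)ᵀ)⁻¹ · e₁`. -/
def transVec (v : R3) (n : ℕ) : Z3 := ((prodM v n)ᵀ)⁻¹ *ᵥ e1

/-- The sequence `Tₙ` of subsets of `ℤ³`: `T₀ = {0}`, `T_{n+1} = Tₙ ∪ (Tₙ + ((M₁⋯Mₙ)ᵀ)⁻¹·e₁)`
(so that `T₁ = {0, e₁}`, the empty matrix product being the identity). -/
def Tseq (v : R3) : ℕ → Set Z3
  | 0 => {0}
  | n + 1 => Tseq v n ∪ ((fun x => x + transVec v n) '' Tseq v n)

/-- The extension of `gcd` to reals `a, b ≥ 0` generating a discrete subgroup: the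
positive generator of `aℤ + bℤ`, i.e. its least positive element. -/
def rgcd (a b : ℝ) : ℝ := sInf {g : ℝ | 0 < g ∧ ∃ m n : ℤ, g = m * a + n * b}

/-!
Iterating `F` while `v₁ + v₂ ≤ v₃` only replaces the pair `(v₁, v₂)` by `(v₁, v₂ - v₁)` up to
order, so the group `v₁ℤ + v₂ℤ` is preserved; once `v₁⁽ⁿ⁰⁾ = 0` it is `gℤ` with `g = gcd(v₁, v₂)`.
Hence `v = g • (p, q, β)` with `p, q` coprime integers, `p + q ≤ β` and `β` irrational (as
`dim_ℚ = 2`), and `P(v, ω) = P((p, q, β), ω / g)`. A point `x` of the latter plane is described by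
its level `x₃` and the integer `u = p x₁ + q x₂`, subject to `0 ≤ u + β x₃ < ω / g`.

For `ω / g = β + 1` each level is a window `c ≤ u ≤ d` with `d - c ≥ p + q`, which is
4-connected, and the point of level `k` with `u + β k = fract (β k)` is joined to the level above
by a vertical edge. For `ω / g < β + 1` a level `k` with `fract (β k) + β ≥ ω / g` has no vertical
edge to the level above; density of `βℤ + ℤ` yields such a level with points of the plane on
both sides of it. So the least connecting thickness `g (β + 1) = v₃ + g` is attained.
-/

theorem Relation.reflTransGen_of_exists_closer {α : Type*} {r : α → α → Prop} {S : Set α}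
    {y : α} (μ : α → ℕ) (h : ∀ x ∈ S, x ≠ y → ∃ z ∈ S, r x z ∧ μ z < μ x) :
    ∀ x ∈ S, Relation.ReflTransGen r x y := by
  intro x hx
  induction hμ : μ x using Nat.strong_induction_on generalizing x with
  | _ n ih =>
    by_cases hxy : x = y
    · rw [hxy]
    · obtain ⟨z, hz, hxz, hlt⟩ := h x hx hxy
      exact .head hxz (ih _ (hμ ▸ hlt) z hz rfl)

lemma Z3.ext {x y : Z3} (h0 : x 0 = y 0) (h1 : x 1 = y 1) (h2 : x 2 = y 2) : x = y := by
  funext i; fin_cases i <;> assumption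

abbrev adjIn (A : Set Z3) (a b : Z3) : Prop := b ∈ A ∧ adj3 a b

lemma adj3_comm {x y : Z3} : adj3 x y ↔ adj3 y x := by
  simp only [adj3, abs_sub_comm (x _)]

lemma adj3_add_iff (x : Z3) (a b c : ℤ) :
    adj3 x (x + ![a, b, c]) ↔ a.natAbs + b.natAbs + c.natAbs = 1 := by
  simp only [adj3, Fin.sum_univ_three, Pi.add_apply, sub_add_cancel_left, abs_neg]
  simp only [Fin.isValue, cons_val_zero, cons_val_one, cons_val, Int.abs_eq_natAbs]
  omega

lemma adj3_of_level_cross {a b : Z3} {k : ℤ} (h : adj3 a b) (ha : a 2 ≤ k) (hb : k < b 2) :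
    a 0 = b 0 ∧ a 1 = b 1 ∧ a 2 = k ∧ b 2 = k + 1 := by
  simp only [adj3, Fin.sum_univ_three, Int.abs_eq_natAbs] at h
  omega

def levelWindow (p q c d k : ℤ) : Set Z3 :=
  {z | z 2 = k ∧ c ≤ p * z 0 + q * z 1 ∧ p * z 0 + q * z 1 ≤ d}

lemma exists_window_step {p q c d X Y X' Y' : ℤ} (hp : 0 ≤ p) (hq : 0 ≤ q)
    (hcd : c + p + q ≤ d) (hc : c ≤ p * X + q * Y) (hd : p * X + q * Y ≤ d)
    (hc' : c ≤ p * X' + q * Y') (hd' : p * X' + q * Y' ≤ d) (hne : X ≠ X' ∨ Y ≠ Y') :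
    ∃ a b : ℤ, a.natAbs + b.natAbs = 1 ∧ c ≤ p * (X + a) + q * (Y + b) ∧
      p * (X + a) + q * (Y + b) ≤ d ∧
      (X' - (X + a)).natAbs + (Y' - (Y + b)).natAbs < (X' - X).natAbs + (Y' - Y).natAbs := by
  rcases lt_trichotomy X X' with hX | rfl | hX
  · by_cases h : p * (X + 1) + q * Y ≤ d
    · exact ⟨1, 0, rfl, by nlinarith, by simpa using h, by omega⟩
    · -- stepping in `X` would leave the window, so `Y` must decrease, and `d - c ≥ p + q`
      -- leaves room for that step
      have hY : Y' < Y := by by_contra; nlinarith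
      exact ⟨0, -1, rfl, by nlinarith, by nlinarith, by omega⟩
  · rcases lt_or_gt_of_ne (hne.resolve_left (absurd rfl)) with hY | hY
    · exact ⟨0, 1, rfl, by nlinarith, by nlinarith, by omega⟩
    · exact ⟨0, -1, rfl, by nlinarith, by nlinarith, by omega⟩
  · by_cases h : c ≤ p * (X + -1) + q * Y
    · exact ⟨-1, 0, rfl, by simpa using h, by nlinarith, by omega⟩
    · have hY : Y < Y' := by by_contra; nlinarith
      exact ⟨0, 1, rfl, by nlinarith, by nlinarith, by omega⟩

lemma reflTransGen_of_levelWindow {A : Set Z3} {p q c d k : ℤ} (hp : 0 ≤ p) (hq : 0 ≤ q)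
    (hcd : c + p + q ≤ d) (hA : levelWindow p q c d k ⊆ A) {x y : Z3}
    (hx : x ∈ levelWindow p q c d k) (hy : y ∈ levelWindow p q c d k) :
    Relation.ReflTransGen (adjIn A) x y := by
  refine Relation.reflTransGen_of_exists_closer
    (fun z => (y 0 - z 0).natAbs + (y 1 - z 1).natAbs) (fun z hz hzy => ?_) x hx
  obtain ⟨hz2, hzc, hzd⟩ := hz
  have hne : z 0 ≠ y 0 ∨ z 1 ≠ y 1 := by
    by_contra! h
    exact hzy (Z3.ext h.1 h.2 (hz2.trans hy.1.symm))
  obtain ⟨a, b, hab, hc, hd, hlt⟩ :=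
    exists_window_step hp hq hcd hzc hzd hy.2.1 hy.2.2 hne
  have hw : z + ![a, b, 0] ∈ levelWindow p q c d k :=
    ⟨by simp [hz2], by simpa using hc, by simpa using hd⟩
  exact ⟨z + ![a, b, 0], hw, ⟨hA hw, (adj3_add_iff z a b 0).2 (by simpa using hab)⟩,
    by simpa using hlt⟩

lemma connected3_of_slices {A : Set Z3}
    (hslice : ∀ x ∈ A, ∀ y ∈ A, x 2 = y 2 → Relation.ReflTransGen (adjIn A) x y)
    (hvert : ∀ k : ℤ, ∃ a ∈ A, a 2 = k ∧ a + ![0, 0, 1] ∈ A) : Connected3 A := by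
  have key : ∀ n : ℕ, ∀ x ∈ A, ∀ y ∈ A, y 2 = x 2 + n →
      Relation.ReflTransGen (adjIn A) x y ∧ Relation.ReflTransGen (adjIn A) y x := by
    intro n
    induction n with
    | zero =>
      intro x hx y hy hxy
      exact ⟨hslice x hx y hy (by simpa using hxy.symm), hslice y hy x hx (by simpa using hxy)⟩
    | succ n ih =>
      intro x hx y hy hxy
      obtain ⟨a, ha, ha2, ha'⟩ := hvert (x 2 + n)
      have hadj : adj3 a (a + ![0, 0, 1]) := (adj3_add_iff a 0 0 1).2 rfl
      have hlevel : (a + ![0, 0, 1] : Z3) 2 = y 2 := by simp [ha2, hxy, add_assoc]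
      obtain ⟨hxa, hax⟩ := ih x hx a ha ha2
      exact ⟨(hxa.tail ⟨ha', hadj⟩).trans (hslice _ ha' y hy hlevel),
        (hslice y hy _ ha' hlevel.symm).tail ⟨ha, adj3_comm.1 hadj⟩ |>.trans hax⟩
  obtain ⟨a, ha, -⟩ := hvert 0
  refine ⟨⟨a, ha⟩, fun x hx y hy => ?_⟩
  rcases le_total (x 2) (y 2) with h | h
  · obtain ⟨n, hn⟩ := Int.le.dest h
    exact (key n x hx y hy hn.symm).1
  · obtain ⟨n, hn⟩ := Int.le.dest h
    exact (key n y hy x hx hn.symm).2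

lemma not_connected3_of_no_crossing {A : Set Z3} {k : ℤ}
    (hcross : ∀ a ∈ A, ∀ b ∈ A, adj3 a b → a 2 ≤ k → k < b 2 → False)
    {x y : Z3} (hx : x ∈ A) (hxk : x 2 ≤ k) (hy : y ∈ A) (hyk : k < y 2) : ¬Connected3 A := by
  intro hA
  have below : ∀ z, Relation.ReflTransGen (adjIn A) x z → z ∈ A ∧ z 2 ≤ k := by
    intro z hz
    induction hz with
    | refl => exact ⟨hx, hxk⟩
    | tail _ hbc ih =>
      exact ⟨hbc.1, not_lt.1 fun h => hcross _ ih.1 _ hbc.1 hbc.2 ih.2 h⟩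
  exact (below y (hA.2 x hx y hy)).2.not_gt hyk

lemma plane_smul {g : ℝ} (hg : 0 < g) (w : R3) (ω : ℝ) : Plane (g • w) ω = Plane w (ω / g) := by
  ext x
  have hdot : dot3 x (g • w) = g * dot3 x w := by
    simp only [dot3, Finset.mul_sum, Pi.smul_apply, smul_eq_mul]
    exact Finset.sum_congr rfl fun i _ => by ring
  simp only [Plane, Set.mem_ofPred_eq, hdot, lt_div_iff₀ hg, mul_comm (dot3 x w) g,
    mul_nonneg_iff_of_pos_left hg]

lemma mem_plane_iff {p q : ℤ} {β ω : ℝ} {x : Z3} :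
    x ∈ Plane ![(p : ℝ), q, β] ω ↔
      0 ≤ ((p * x 0 + q * x 1 : ℤ) : ℝ) + β * x 2 ∧ ((p * x 0 + q * x 1 : ℤ) : ℝ) + β * x 2 < ω := by
  have hdot : dot3 x ![(p : ℝ), q, β] = ((p * x 0 + q * x 1 : ℤ) : ℝ) + β * x 2 := by
    simp only [dot3, Fin.sum_univ_three, Fin.isValue, cons_val_zero, cons_val_one, cons_val,
      Int.cast_add, Int.cast_mul]
    ring
  simp only [Plane, Set.mem_ofPred_eq, hdot]

lemma IsCoprime.exists_point_at_level {p q : ℤ} (h : IsCoprime p q) (m k : ℤ) :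
    ∃ x : Z3, p * x 0 + q * x 1 = m ∧ x 2 = k := by
  obtain ⟨u, v, huv⟩ := h
  exact ⟨![u * m, v * m, k], by
    simp only [Fin.isValue, cons_val_zero, cons_val_one]; linear_combination m * huv, rfl⟩

lemma neg_floor_add_eq_fract (t : ℝ) : ((-⌊t⌋ : ℤ) : ℝ) + t = Int.fract t := by
  rw [Int.fract]; push_cast; ring

section ThickPlane

variable {p q : ℤ} {β : ℝ} (hp : 0 ≤ p) (hq : 0 ≤ q) (hpqβ : (p + q : ℝ) ≤ β)
include hp hq hpqβ

lemma reflTransGen_plane_of_level_eq {x y : Z3} (hx : x ∈ Plane ![(p : ℝ), q, β] (β + 1))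
    (hy : y ∈ Plane ![(p : ℝ), q, β] (β + 1)) (hxy : x 2 = y 2) :
    Relation.ReflTransGen (adjIn (Plane ![(p : ℝ), q, β] (β + 1))) x y := by
  rw [mem_plane_iff] at hx hy
  rw [← hxy] at hy
  set k := x 2
  set c : ℤ := -⌊β * k⌋
  have hc : 0 ≤ (c : ℝ) + β * k ∧ (c : ℝ) + β * k < 1 := by
    rw [neg_floor_add_eq_fract]; exact ⟨Int.fract_nonneg _, Int.fract_lt_one _⟩
  have hc_le {z : Z3} (hz : 0 ≤ ((p * z 0 + q * z 1 : ℤ) : ℝ) + β * k) :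
      c ≤ p * z 0 + q * z 1 := by
    have : ((-(p * z 0 + q * z 1) : ℤ) : ℝ) ≤ β * k := by push_cast at hz ⊢; linarith
    have := Int.le_floor.2 this
    omega
  -- any upper end of the window that is at least those of `x`, `y` and `c + p + q` will do
  set d := max (max (p * x 0 + q * x 1) (p * y 0 + q * y 1)) (c + p + q)
  have hd : (d : ℝ) < β + 1 - β * k := by
    simp only [d, Int.cast_max]
    refine max_lt (max_lt (by linarith [hx.2]) (by linarith [hy.2])) ?_
    push_cast
    linarith [hc.2]
  refine reflTransGen_of_levelWindow hp hq (le_max_right _ _) (fun z hz => ?_)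
    ⟨rfl, hc_le hx.1, (le_max_left _ _).trans (le_max_left _ _)⟩
    ⟨hxy.symm, hc_le hy.1, (le_max_right _ _).trans (le_max_left _ _)⟩
  obtain ⟨hz2, hzc, hzd⟩ := hz
  rw [mem_plane_iff, hz2]
  have hzc' : (c : ℝ) ≤ ((p * z 0 + q * z 1 : ℤ) : ℝ) := by exact_mod_cast hzc
  have hzd' : ((p * z 0 + q * z 1 : ℤ) : ℝ) ≤ d := by exact_mod_cast hzd
  constructor <;> linarith [hc.1]

lemma connected3_plane (hcop : IsCoprime p q) :
    Connected3 (Plane ![(p : ℝ), q, β] (β + 1)) := by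
  refine connected3_of_slices
    (fun x hx y hy hxy => reflTransGen_plane_of_level_eq hp hq hpqβ hx hy hxy) fun k => ?_
  obtain ⟨a, ha, ha2⟩ := hcop.exists_point_at_level (-⌊β * k⌋) k
  have hβ : 0 ≤ β := by
    have : (0 : ℝ) ≤ p + q := by exact_mod_cast add_nonneg hp hq
    linarith
  have hb : p * (a + ![0, 0, 1] : Z3) 0 + q * (a + ![0, 0, 1] : Z3) 1 = -⌊β * k⌋ := by
    simpa using ha
  have hb2 : (a + ![0, 0, 1] : Z3) 2 = k + 1 := by simp [ha2]
  have h0 := Int.fract_nonneg (β * k)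
  have h1 := Int.fract_lt_one (β * k)
  refine ⟨a, ?_, ha2, ?_⟩
  · rw [mem_plane_iff, ha, ha2, neg_floor_add_eq_fract]
    constructor <;> linarith
  · rw [mem_plane_iff, hb, hb2, Int.cast_add, Int.cast_one, mul_add_one, ← add_assoc,
      neg_floor_add_eq_fract]
    constructor <;> linarith

end ThickPlane

lemma Irrational.exists_int_add_mul_mem_Ioo {β : ℝ} (hβ : Irrational β) {a b : ℝ} (hab : a < b) :
    ∃ k m : ℤ, a < m + β * k ∧ m + β * k < b := by
  have hd : Dense (AddSubgroup.closure {β, 1} : Set ℝ) :=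
    dense_addSubgroupClosure_pair_iff.2 (by simpa using hβ)
  obtain ⟨c, hc, hac, hcb⟩ := hd.exists_between hab
  obtain ⟨k, m, rfl⟩ := AddSubgroup.mem_closure_pair.1 hc
  exact ⟨k, m, by simpa [add_comm, mul_comm] using hac, by simpa [add_comm, mul_comm] using hcb⟩

section ThinPlane

variable {p q : ℤ} {β ω : ℝ}

lemma not_connected3_plane_of_gap (hcop : IsCoprime p q) {k : ℤ}
    (hgap : ∀ m : ℤ, 0 ≤ m + β * k → ω ≤ m + β * k + β) {j₁ j₂ m₁ m₂ : ℤ}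
    (hj₁ : j₁ ≤ k) (hj₂ : k < j₂) (h₁ : 0 ≤ m₁ + β * j₁ ∧ m₁ + β * j₁ < ω)
    (h₂ : 0 ≤ m₂ + β * j₂ ∧ m₂ + β * j₂ < ω) : ¬Connected3 (Plane ![(p : ℝ), q, β] ω) := by
  obtain ⟨x, hxm, hxj⟩ := hcop.exists_point_at_level m₁ j₁
  obtain ⟨y, hym, hyj⟩ := hcop.exists_point_at_level m₂ j₂
  refine not_connected3_of_no_crossing (k := k) (fun a ha b hb hab hak hbk => ?_)
    (x := x) (by rwa [mem_plane_iff, hxm, hxj]) (hxj ▸ hj₁)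
    (y := y) (by rwa [mem_plane_iff, hym, hyj]) (hyj ▸ hj₂)
  obtain ⟨h0, h1, ha2, hb2⟩ := adj3_of_level_cross hab hak hbk
  rw [mem_plane_iff] at ha hb
  have := hgap _ (ha2 ▸ ha.1)
  rw [← h0, ← h1, hb2] at hb
  push_cast at hb this
  linarith [hb.2]

lemma le_of_connected3_plane (hβ : Irrational β) (hβ1 : 1 ≤ β) (hcop : IsCoprime p q)
    (h : Connected3 (Plane ![(p : ℝ), q, β] ω)) : β + 1 ≤ ω := by
  by_contra! hlt
  obtain ⟨x, hx⟩ := h.1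
  rw [mem_plane_iff] at hx
  have hω : 0 < ω := hx.1.trans_lt hx.2
  rcases le_or_gt ω β with hωβ | hβω
  · have hgap (k m : ℤ) (_ : 0 ≤ m + β * k) : ω ≤ m + β * k + β := by linarith
    obtain ⟨k, m, hm₀, hm₁⟩ := hβ.exists_int_add_mul_mem_Ioo (lt_min hω one_pos)
    have h₀ : (0 : ℝ) ≤ ((0 : ℤ) : ℝ) + β * ((0 : ℤ) : ℝ) ∧
        ((0 : ℤ) : ℝ) + β * ((0 : ℤ) : ℝ) < ω := by
      simpa using hω
    have hk : 0 ≤ m + β * k ∧ m + β * k < ω := ⟨hm₀.le, hm₁.trans_le (min_le_left _ _)⟩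
    rcases lt_trichotomy k 0 with hk0 | rfl | hk0
    · exact not_connected3_plane_of_gap hcop (hgap k) le_rfl hk0 hk h₀ h
    · have : (0 : ℝ) < m ∧ (m : ℝ) < 1 := by
        simp only [Int.cast_zero, mul_zero, add_zero] at hm₀ hm₁
        exact ⟨hm₀, hm₁.trans_le (min_le_right _ _)⟩
      have : (0 : ℤ) < m ∧ m < 1 := by exact_mod_cast this
      omega
    · exact not_connected3_plane_of_gap hcop (hgap 0) le_rfl hk0 h₀ hk h
  · obtain ⟨k, m, hm₀, hm₁⟩ := hβ.exists_int_add_mul_mem_Ioo (sub_lt_iff_lt_add'.2 hlt)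
    -- `m + β k = fract (β k)` lies in `(ω - β, 1)`
    have hgap (m' : ℤ) (hm' : 0 ≤ m' + β * k) : ω ≤ m' + β * k + β := by
      have : m ≤ m' := by
        have : (m : ℝ) - m' < 1 := by linarith
        have : m - m' < 1 := by exact_mod_cast this
        omega
      have : (m : ℝ) ≤ m' := by exact_mod_cast this
      linarith
    have hfr := neg_floor_add_eq_fract (β * (k + 1 : ℤ))
    refine not_connected3_plane_of_gap hcop hgap le_rfl (lt_add_one k) (m₁ := m)
      ⟨by linarith, by linarith⟩ (m₂ := -⌊β * (k + 1 : ℤ)⌋) ?_ h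
    rw [hfr]
    exact ⟨Int.fract_nonneg _, (Int.fract_lt_one _).trans_le (hβ1.trans hβω.le)⟩

end ThinPlane
lemma AddSubgroup.closure_pair_sub {G : Type*} [AddCommGroup G] (a b : G) :
    closure {a, b - a} = closure {a, b} := by
  apply le_antisymm <;> rw [closure_le, Set.insert_subset_iff, Set.singleton_subset_iff]
  · exact ⟨subset_closure (by simp), sub_mem (subset_closure (by simp)) (subset_closure (by simp))⟩
  · refine ⟨subset_closure (by simp), ?_⟩
    simpa using add_mem (subset_closure (Set.mem_insert_of_mem a rfl) : b - a ∈ closure {a, b - a})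
      (subset_closure (Set.mem_insert a _))

lemma FS_of_add_le {v : R3} (hv : v ∈ O3) (hs : v 0 + v 1 ≤ v 2) :
    FS v ∈ O3 ∧ FS v 0 + FS v 1 ≤ FS v 2 ∧ ({FS v 0, FS v 1} : Set ℝ) = {v 0, v 1 - v 0} := by
  obtain ⟨h0, h01, h12⟩ := hv
  unfold FS
  split_ifs with hc1 hc2 <;>
    simp only [O3, Set.mem_ofPred_eq, Fin.isValue, cons_val_zero, cons_val_one, cons_val]
  · exact ⟨⟨h0, hc1.1, by linarith⟩, by linarith, trivial⟩
  · exact ⟨⟨by linarith, hc2.1.le, by linarith⟩, by linarith, Set.pair_comm _ _⟩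
  · exfalso
    simp only [not_and_or, not_le, not_lt] at hc1 hc2
    rcases hc1 with h | h <;> rcases hc2 with h' | h' <;> linarith

lemma FS_iterate_of_add_le {v : R3} (hv : v ∈ O3) (hs : v 0 + v 1 ≤ v 2) (n : ℕ) :
    FS^[n] v ∈ O3 ∧ (FS^[n] v) 0 + (FS^[n] v) 1 ≤ (FS^[n] v) 2 ∧
      AddSubgroup.closure {(FS^[n] v) 0, (FS^[n] v) 1} = AddSubgroup.closure {v 0, v 1} := by
  induction n with
  | zero => exact ⟨hv, hs, rfl⟩
  | succ n ih =>
    obtain ⟨hO, hs', hcl⟩ := ih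
    obtain ⟨hO'', hs'', hpair⟩ := FS_of_add_le hO hs'
    rw [Function.iterate_succ_apply']
    exact ⟨hO'', hs'', by rw [hpair, AddSubgroup.closure_pair_sub, hcl]⟩

lemma rgcd_eq_of_closure_eq_zmultiples {a b g : ℝ} (hg : 0 < g)
    (h : AddSubgroup.closure {a, b} = AddSubgroup.zmultiples g) : rgcd a b = g := by
  have hmem : ∀ x, (∃ m n : ℤ, x = m * a + n * b) ↔ x ∈ AddSubgroup.zmultiples g := by
    intro x
    simp only [← h, AddSubgroup.mem_closure_pair, zsmul_eq_mul, eq_comm]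
  refine IsLeast.csInf_eq ⟨⟨hg, (hmem g).2 (AddSubgroup.mem_zmultiples g)⟩, ?_⟩
  rintro x ⟨hx, hxg⟩
  obtain ⟨k, rfl⟩ := AddSubgroup.mem_zmultiples_iff.1 ((hmem x).1 hxg)
  rw [zsmul_eq_mul] at hx ⊢
  have : (0 : ℤ) < k := by exact_mod_cast pos_of_mul_pos_left hx hg.le
  have : (1 : ℝ) ≤ k := by exact_mod_cast this
  nlinarith

lemma finrank_span_le_one_of_subset {s : Set ℝ} {z : ℝ} (h : s ⊆ ℚ ∙ z) :
    Module.finrank ℚ (Submodule.span ℚ s) ≤ 1 :=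
  (Submodule.finrank_mono (Submodule.span_le.2 h)).trans
    ((finrank_span_le_card {z}).trans (by simp))

lemma exists_closure_eq_zmultiples {v : R3} (hv : v ∈ O3) (hsum : v 0 + v 1 ≤ v 2) {n0 : ℕ}
    (hn0 : (FS^[n0] v) 0 = 0) :
    ∃ g : ℝ, 0 ≤ g ∧ AddSubgroup.closure {v 0, v 1} = AddSubgroup.zmultiples g := by
  obtain ⟨⟨h0, h01, -⟩, -, hcl⟩ := FS_iterate_of_add_le hv hsum n0
  rw [hn0, AddSubgroup.closure_insert_zero, ← AddSubgroup.zmultiples_eq_closure] at hcl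
  exact ⟨_, h0.trans h01, hcl.symm⟩

lemma isCoprime_of_closure_eq_zmultiples {p q : ℤ} {g : ℝ} (hg : g ≠ 0)
    (h : AddSubgroup.closure {(p * g : ℝ), q * g} = AddSubgroup.zmultiples g) : IsCoprime p q := by
  obtain ⟨m, n, hmn⟩ := AddSubgroup.mem_closure_pair.1 (h ▸ AddSubgroup.mem_zmultiples g)
  have : ((m * p + n * q : ℤ) : ℝ) * g = 1 * g := by
    rw [zsmul_eq_mul, zsmul_eq_mul] at hmn
    push_cast
    linear_combination hmn
  exact ⟨m, n, by exact_mod_cast mul_right_cancel₀ hg this⟩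

theorem exists_normal_form {v : R3} (hv : v ∈ O3)
    (hdim : Module.finrank ℚ (Submodule.span ℚ ({v 0, v 1, v 2} : Set ℝ)) = 2)
    (hsum : v 0 + v 1 ≤ v 2) {n0 : ℕ} (hn0 : (FS^[n0] v) 0 = 0) :
    ∃ (g β : ℝ) (p q : ℤ), 0 < g ∧ 0 ≤ p ∧ 1 ≤ q ∧ IsCoprime p q ∧ Irrational β ∧
      (p + q : ℝ) ≤ β ∧ v = g • ![(p : ℝ), q, β] ∧ rgcd (v 0) (v 1) = g := by
  obtain ⟨g, hg0, hcl⟩ := exists_closure_eq_zmultiples hv hsum hn0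
  have hmul {t : ℝ} (ht : t ∈ ({v 0, v 1} : Set ℝ)) : ∃ k : ℤ, t = k * g := by
    obtain ⟨k, hk⟩ := AddSubgroup.mem_zmultiples_iff.1 (hcl ▸ AddSubgroup.subset_closure ht)
    exact ⟨k, by rw [← hk, zsmul_eq_mul]⟩
  obtain ⟨p, hp⟩ := hmul (t := v 0) (by simp)
  obtain ⟨q, hq⟩ := hmul (t := v 1) (by simp)
  have hlow {z : ℝ} (h : v 2 ∈ ℚ ∙ z) (h01 : v 0 ∈ ℚ ∙ z ∧ v 1 ∈ ℚ ∙ z) : False := by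
    have := finrank_span_le_one_of_subset (s := {v 0, v 1, v 2}) (z := z)
      (by simp [Set.insert_subset_iff, h, h01])
    omega
  have hg : 0 < g := by
    refine hg0.lt_of_ne fun hg => hlow (Submodule.mem_span_singleton_self _) ?_
    simp [hp, hq, ← hg]
  have hgmem (k : ℤ) : (k * g : ℝ) ∈ ℚ ∙ g :=
    Submodule.mem_span_singleton.2 ⟨k, by rw [Rat.smul_def, Rat.cast_intCast]⟩
  set β := v 2 / g
  have hβg : v 2 = β * g := (div_mul_cancel₀ _ hg.ne').symm
  have hβ : Irrational β := by
    rintro ⟨r, hr⟩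
    refine hlow (Submodule.mem_span_singleton.2 ⟨r, ?_⟩) ⟨hp ▸ hgmem p, hq ▸ hgmem q⟩
    rw [Rat.smul_def, hr, hβg]
  have hcop : IsCoprime p q := isCoprime_of_closure_eq_zmultiples hg.ne' (hp ▸ hq ▸ hcl)
  have hp0 : (0 : ℝ) ≤ p := (mul_nonneg_iff_of_pos_right hg).1 (hp ▸ hv.1)
  have hpq : (p : ℝ) ≤ q := le_of_mul_le_mul_right (hp ▸ hq ▸ hv.2.1) hg
  refine ⟨g, β, p, q, hg, by exact_mod_cast hp0, ?_, hcop, hβ, ?_, ?_,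
    rgcd_eq_of_closure_eq_zmultiples hg hcl⟩
  · by_contra! hq1
    have : p ≤ q := by exact_mod_cast hpq
    have : 0 ≤ p := by exact_mod_cast hp0
    obtain ⟨rfl, rfl⟩ : p = 0 ∧ q = 0 := by omega
    exact not_isCoprime_zero_zero hcop
  · refine le_of_mul_le_mul_right ?_ hg
    rw [← hβg, add_mul, ← hp, ← hq]
    exact hsum
  · ext i; fin_cases i <;> simp [hp, hq, hβg, mul_comm]

/-- If `v ∈ O₃⁺`, `dim_ℚ(v₁,v₂,v₃) = 2`, `v₁ + v₂ ≤ v₃` and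
`v₁⁽ⁿ⁰⁾ = 0` for some `n₀`, then `P(v, Ω(v))` is 2-connected and
`Ω(v) = v₃ + gcd(v₁, v₂)`. -/
theorem connected_dim_two_case (v : R3) (hv : v ∈ O3)
    (hdim : Module.finrank ℚ (Submodule.span ℚ ({v 0, v 1, v 2} : Set ℝ)) = 2)
    (hsum : v 0 + v 1 ≤ v 2) (n0 : ℕ) (hn0 : (FS^[n0] v) 0 = 0) :
    Connected3 (Plane v (omegaConn v)) ∧
    omegaConn v = v 2 + rgcd (v 0) (v 1) := by
  obtain ⟨g, β, p, q, hg, hp, hq, hcop, hβ, hpqβ, rfl, hrg⟩ := exists_normal_form hv hdim hsum hn0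
  have hβ1 : 1 ≤ β := by
    have : (1 : ℝ) ≤ p + q := by exact_mod_cast (by omega : 1 ≤ p + q)
    linarith
  have hconn : Connected3 (Plane (g • ![(p : ℝ), q, β]) (g * (β + 1))) := by
    rw [plane_smul hg, mul_div_cancel_left₀ _ hg.ne']
    exact connected3_plane hp (by omega) hpqβ hcop
  have homega : omegaConn (g • ![(p : ℝ), q, β]) = g * (β + 1) := by
    refine IsLeast.csInf_eq ⟨⟨by positivity, hconn⟩, fun ω ⟨_, hω⟩ => ?_⟩
    rw [plane_smul hg] at hω
    have := le_of_connected3_plane hβ hβ1 hcop hω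
    rwa [le_div_iff₀ hg, mul_comm] at this
  refine ⟨homega ▸ hconn, ?_⟩
  rw [homega, hrg, Pi.smul_apply, smul_eq_mul]
  simp only [Fin.isValue, cons_val]
  ring

end
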